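/- Let f be a sieve function of range Q with Eratosthenes transform g supported in [1,Q]. Then f admits the finite Ramanujan expansion f(n) = ∑_{ℓ ≤ Q} R_ℓ(f) c_ℓ(n) for every positive integer n, where c_ℓ(n) = ∑_{1 ≤ j ≤ ℓ, (j,ℓ)=1} e(jn/ℓ) is the Ramanujan sum and R_ℓ(f) = ∑_{d ≤ Q, ℓ|d} g(d)/d. -/

import Mathlib

/-!
Sorting `1 ≤ k ≤ d` by the reduced denominator `ℓ = d / gcd(k, d)` of `k / d` gives
`∑_{ℓ ∣ d} c_ℓ(n) = ∑_{k ≤ d} e(kn/d)`, a full geometric sum equal to `d` if `d ∣ n` and to `0`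
otherwise. Substituting `R_ℓ(f) = ∑_{d ≤ Q, ℓ ∣ d} g(d)/d` and summing over `ℓ ∣ d` first thus
leaves `∑_{d ≤ Q, d ∣ n} g(d) = f(n)`.
-/

open Finset
open scoped Classical

noncomputable section

/-- `e(α) = e^{2πiα}`. -/
def expi (α : ℝ) : ℂ := Complex.exp (2 * Real.pi * Complex.I * α)

/-- The sieve function of range `Q` attached to the Eratosthenes transform `g`:
`f(n) = ∑_{d ∣ n, d ≤ Q} g(d)`. -/
def sieveFn (g : ℕ → ℝ) (Q : ℕ) (n : ℕ) : ℝ :=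
  ∑ d ∈ n.divisors.filter (fun d => d ≤ Q), g d

/-- The sieve function evaluated at integer arguments (used for shifted arguments
`f(n-a)`, divisibility being understood in `ℤ`). -/
def sieveZ (g : ℕ → ℝ) (Q : ℕ) (m : ℤ) : ℝ :=
  ∑ d ∈ Finset.Icc 1 Q, if (d : ℤ) ∣ m then g d else 0

/-- `g` is essentially bounded, with constant `Cg ε` for the exponent `ε`:
`g(d) ≪_ε d^ε` for every `ε > 0`. -/
def EssBddWith (Cg : ℝ → ℝ) (g : ℕ → ℝ) : Prop :=
  ∀ ε : ℝ, 0 < ε → ∀ d : ℕ, 1 ≤ d → |g d| ≤ Cg ε * (d : ℝ) ^ ε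

/-- `g` is supported in `[1,Q]`. -/
def SuppIn (g : ℕ → ℝ) (Q : ℕ) : Prop := ∀ d : ℕ, g d ≠ 0 → 1 ≤ d ∧ d ≤ Q

/-- The restricted weight `w_H`. -/
def wH (w : ℝ → ℝ) (H : ℕ) (h : ℤ) : ℝ := if |h| ≤ (H : ℤ) then w h else 0

/-- `ŵ_H(β) = ∑_{0 ≤ |h| ≤ H} w(h) e(hβ)`. -/
def wHat (w : ℝ → ℝ) (H : ℕ) (β : ℝ) : ℂ :=
  ∑ h ∈ Finset.Icc (-(H : ℤ)) (H : ℤ), (w h : ℂ) * expi (h * β)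

/-- `ŵ_H(0)`, as a real number. -/
def wHat0 (w : ℝ → ℝ) (H : ℕ) : ℝ := ∑ h ∈ Finset.Icc (-(H : ℤ)) (H : ℤ), w h

/-- The correlation `W_H(a) = ∑_h w_H(h) w_H(h-a)` of `w_H`. -/
def WHcorr (w : ℝ → ℝ) (H : ℕ) (a : ℤ) : ℝ :=
  ∑ h ∈ Finset.Icc (-(H : ℤ)) (H : ℤ), wH w H h * wH w H (h - a)

/-- `Ŵ_H(β) = ∑_{0 ≤ |h| ≤ 2H} W_H(h) e(hβ)`. -/
def WHat (w : ℝ → ℝ) (H : ℕ) (β : ℝ) : ℂ :=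
  ∑ h ∈ Finset.Icc (-(2 * H : ℤ)) (2 * H : ℤ), (WHcorr w H h : ℂ) * expi (h * β)

/-- `Ŵ_H(0)`, as a real number. -/
def WHat0 (w : ℝ → ℝ) (H : ℕ) : ℝ :=
  ∑ h ∈ Finset.Icc (-(2 * H : ℤ)) (2 * H : ℤ), WHcorr w H h

/-- `L¹_ℓ(F) = (1/ℓ) ∑_{j<ℓ, (j,ℓ)=1} |F(j/ℓ)|` (the sum being over `j ≥ 1`). -/
def Lone (F : ℝ → ℂ) (ℓ : ℕ) : ℝ :=
  (ℓ : ℝ)⁻¹ * ∑ j ∈ (Finset.Ico 1 ℓ).filter (fun j => Nat.Coprime j ℓ), ‖F (j / ℓ)‖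

/-- `L²_ℓ(F) = (1/ℓ²) ∑_{j<ℓ} |F(j/ℓ)|²` (the sum being over `j ≥ 1`). -/
def Ltwo (F : ℝ → ℂ) (ℓ : ℕ) : ℝ :=
  ((ℓ : ℝ) ^ 2)⁻¹ * ∑ j ∈ Finset.Ico 1 ℓ, ‖F (j / ℓ)‖ ^ 2

/-- A good weight: `w_H` is uniformly bounded as `H → ∞` and
`L²_ℓ(ŵ_H) ≪ H/ℓ` for all `ℓ ≥ 1`. -/
def GoodWeight (w : ℝ → ℝ) : Prop :=
  (∃ B : ℝ, ∀ (H : ℕ) (h : ℤ), |wH w H h| ≤ B) ∧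
    ∃ C : ℝ, ∀ H ℓ : ℕ, 1 ≤ H → 1 ≤ ℓ → Ltwo (wHat w H) ℓ ≤ C * H / ℓ

/-- `∑_{n ∼ N, n ≡ a (mod q)} f(n)`. -/
def bandSum (f : ℕ → ℝ) (N q : ℕ) (a : ℤ) : ℝ :=
  ∑ n ∈ (Finset.Ioc N (2 * N)).filter (fun (n : ℕ) => (n : ℤ) % q = a % q), f n

/-- `T_{w,f}(q,N,H) = ∑_{0≤|a|≤H} w(a) ∑_{n∼N, n≡a (q)} f(n) − (ŵ_H(0)/q) ∑_{n∼N} f(n)`. -/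
def Twf (w : ℝ → ℝ) (f : ℕ → ℝ) (q N H : ℕ) : ℝ :=
  (∑ a ∈ Finset.Icc (-(H : ℤ)) (H : ℤ), w a * bandSum f N q a) -
    wHat0 w H * (∑ n ∈ Finset.Ioc N (2 * N), f n) / q

/-- `T_{W,f}(q,N,H) = ∑_a W_H(a) ∑_{n∼N, n≡a (q)} f(n) − (Ŵ_H(0)/q) ∑_{n∼N} f(n)`. -/
def TWf (w : ℝ → ℝ) (f : ℕ → ℝ) (q N H : ℕ) : ℝ :=
  (∑ a ∈ Finset.Icc (-(2 * H : ℤ)) (2 * H : ℤ), WHcorr w H a * bandSum f N q a) -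
    WHat0 w H * (∑ n ∈ Finset.Ioc N (2 * N), f n) / q

/-- `T_f(q,N,H) = ∑_{1≤a≤H} ∑_{n∼N, n≡a (q)} f(n) − (H/q) ∑_{n∼N} f(n)`. -/
def Tf (f : ℕ → ℝ) (q N H : ℕ) : ℝ :=
  (∑ a ∈ Finset.Icc 1 H, bandSum f N q (a : ℤ)) -
    (H : ℝ) * (∑ n ∈ Finset.Ioc N (2 * N), f n) / q

/-- The first Ramanujan coefficient `R_1(f) = ∑_{d ≤ Q} g(d)/d`. -/
def Rcoef1 (g : ℕ → ℝ) (Q : ℕ) : ℝ := ∑ d ∈ Finset.Icc 1 Q, g d / d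

/-- The `ℓ`-th Ramanujan coefficient `R_ℓ(f) = ∑_{d ≤ Q, ℓ ∣ d} g(d)/d`. -/
def Rcoef (g : ℕ → ℝ) (Q ℓ : ℕ) : ℝ :=
  ∑ d ∈ (Finset.Icc 1 Q).filter (fun d => ℓ ∣ d), g d / d

/-- The short weighted sum `∑_n w_H(n−x) f(n)`. -/
def shortSum (w : ℝ → ℝ) (H : ℕ) (f : ℕ → ℝ) (x : ℕ) : ℝ :=
  ∑ n ∈ Finset.Icc 1 (x + H), wH w H ((n : ℤ) - (x : ℤ)) * f n

/-- The mixed weighted Selberg integral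
`J_{w,(f₁,f₂)}(N,H) = ∑_{x∼N} ∏_j (∑_n w_H(n−x) f_j(n) − ŵ_H(0) R_1(f_j))`,
where `r_j = R_1(f_j)`. -/
def Jmix (w : ℝ → ℝ) (f₁ f₂ : ℕ → ℝ) (r₁ r₂ : ℝ) (N H : ℕ) : ℝ :=
  ∑ x ∈ Finset.Ioc N (2 * N),
    (shortSum w H f₁ x - wHat0 w H * r₁) * (shortSum w H f₂ x - wHat0 w H * r₂)

/-- The Selberg integral `J_f(N,H) = ∑_{x∼N} |∑_{x<n≤x+H} f(n) − R_1(f) H|²`,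
where `r = R_1(f)`. -/
def Jf (f : ℕ → ℝ) (r : ℝ) (N H : ℕ) : ℝ :=
  ∑ x ∈ Finset.Ioc N (2 * N), ((∑ n ∈ Finset.Ioc x (x + H), f n) - r * H) ^ 2

/-- The correlation `C_{f₁,f₂}(a) = ∑_{n∼N} f₁(n) f₂(n−a)` of the sieve functions
attached to `g₁, g₂` of ranges `Q₁, Q₂`. -/
def corrFn (g₁ g₂ : ℕ → ℝ) (Q₁ Q₂ N : ℕ) (a : ℤ) : ℝ :=
  ∑ n ∈ Finset.Ioc N (2 * N), sieveFn g₁ Q₁ n * sieveZ g₂ Q₂ ((n : ℤ) - a)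

/-- The unit step weight `u`. -/
def ustep : ℝ → ℝ := fun x => if 0 < x then 1 else 0

/-- The Cesàro weight `C_H`. -/
def cesaro (H : ℕ) : ℝ → ℝ := fun x => if |x| ≤ (H : ℝ) then 1 - |x| / H else 0

/-- Goldston's truncated divisor sum `Λ_R(n) = ∑_{d∣n, d≤R} μ(d) log(R/d)`. -/
def LambdaR (R : ℕ) (n : ℕ) : ℝ :=
  ∑ d ∈ n.divisors.filter (fun d => d ≤ R),
    ((ArithmeticFunction.moebius d : ℤ) : ℝ) * Real.log ((R : ℝ) / d)

/-- Goldston's truncated divisor sum at integer arguments. -/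
def LambdaRZ (R : ℕ) (m : ℤ) : ℝ :=
  ∑ d ∈ Finset.Icc 1 R,
    if (d : ℤ) ∣ m then ((ArithmeticFunction.moebius d : ℤ) : ℝ) * Real.log ((R : ℝ) / d) else 0

lemma expi_intCast (m : ℤ) : expi m = 1 := by
  rw [expi, ← Complex.exp_int_mul_two_pi_mul_I m]
  congr 1
  push_cast
  ring

lemma expi_natCast_mul (k : ℕ) (x : ℝ) : expi (k * x) = expi x ^ k := by
  rw [expi, expi, ← Complex.exp_nat_mul]
  congr 1
  push_cast
  ring

lemma expi_eq_one_iff (x : ℝ) : expi x = 1 ↔ ∃ m : ℤ, x = m := by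
  have h2πi : 2 * Real.pi * Complex.I ≠ 0 := by simp [Real.pi_ne_zero]
  rw [expi, Complex.exp_eq_one_iff]
  refine exists_congr fun m => ⟨fun h => ?_, fun h => by rw [h]; push_cast; ring⟩
  exact_mod_cast mul_left_cancel₀ h2πi (h.trans (mul_comm _ _))

def ramanujanSum (ℓ : ℕ) (n : ℤ) : ℂ :=
  ∑ j ∈ (Icc 1 ℓ).filter (fun j => Nat.Coprime j ℓ), expi (j * n / ℓ)

lemma sum_Icc_expi_div (d : ℕ) (n : ℤ) :
    ∑ k ∈ Icc 1 d, expi (k * n / d) = if (d : ℤ) ∣ n then (d : ℂ) else 0 := by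
  rcases Nat.eq_zero_or_pos d with rfl | hd
  · simp
  have hd₀ : (d : ℝ) ≠ 0 := by positivity
  set z := expi (n / d)
  have hpow : ∀ k : ℕ, expi (k * n / d) = z ^ k := fun k => by
    rw [← expi_natCast_mul, mul_div_assoc]
  have hz : z = 1 ↔ (d : ℤ) ∣ n := by
    rw [expi_eq_one_iff, dvd_iff_exists_eq_mul_left]
    refine exists_congr fun m => ?_
    rw [div_eq_iff hd₀, ← Int.cast_natCast d, ← Int.cast_mul, Int.cast_inj]
  have hshift : ∑ k ∈ Icc 1 d, z ^ k = z * ∑ k ∈ range d, z ^ k := by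
    rw [← Ico_add_one_right_eq_Icc, sum_Ico_eq_sum_range, mul_sum]
    simp only [add_tsub_cancel_right, pow_add, pow_one]
  simp only [hpow, hshift]
  split_ifs with hdn
  · simp [hz.2 hdn]
  · have hzd : z ^ d = 1 := by
      rw [← hpow, mul_div_cancel_left₀ _ hd₀, expi_intCast]
    have hgeom := geom_sum_mul z d
    rw [hzd, sub_self, mul_eq_zero] at hgeom
    rw [hgeom.resolve_right (sub_ne_zero.2 (mt hz.1 hdn)), mul_zero]

lemma gcd_mul_div_self_of_coprime {ℓ j d : ℕ} (hℓd : ℓ ∣ d) (hj : Nat.Coprime j ℓ) :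
    Nat.gcd (j * (d / ℓ)) d = d / ℓ := by
  obtain ⟨m, rfl⟩ := hℓd
  rcases Nat.eq_zero_or_pos ℓ with rfl | hℓ
  · simp
  rw [Nat.mul_div_cancel_left _ hℓ, Nat.gcd_mul_right, hj, one_mul]

lemma sum_divisors_ramanujanSum_eq_sum_Icc (d : ℕ) (n : ℤ) :
    ∑ ℓ ∈ d.divisors, ramanujanSum ℓ n = ∑ k ∈ Icc 1 d, expi (k * n / d) := by
  rcases Nat.eq_zero_or_pos d with rfl | hd
  · simp
  simp only [ramanujanSum, sum_sigma']
  refine sum_nbij' (fun p => p.2 * (d / p.1))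
    (fun k => ⟨d / Nat.gcd k d, k / Nat.gcd k d⟩) ?_ ?_ ?_ ?_ ?_
  · rintro ⟨ℓ, j⟩ hp
    simp only [mem_sigma, Nat.mem_divisors, mem_filter, mem_Icc] at hp ⊢
    obtain ⟨⟨hℓd, -⟩, ⟨hj, hjℓ⟩, -⟩ := hp
    refine ⟨Nat.mul_pos hj (Nat.div_pos (Nat.le_of_dvd hd hℓd) (by omega)), ?_⟩
    calc j * (d / ℓ) ≤ ℓ * (d / ℓ) := Nat.mul_le_mul_right _ hjℓ
      _ = d := Nat.mul_div_cancel' hℓd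
  · intro k hk
    simp only [mem_Icc] at hk
    have hg : 0 < Nat.gcd k d := Nat.gcd_pos_of_pos_right _ hd
    simp only [mem_sigma, Nat.mem_divisors, mem_filter, mem_Icc]
    refine ⟨⟨Nat.div_dvd_of_dvd (Nat.gcd_dvd_right _ _), hd.ne'⟩,
      ⟨Nat.div_pos (Nat.gcd_le_left _ hk.1) hg, Nat.div_le_div_right hk.2⟩,
      Nat.coprime_div_gcd_div_gcd hg⟩
  · rintro ⟨ℓ, j⟩ hp
    simp only [mem_sigma, Nat.mem_divisors, mem_filter, mem_Icc] at hp
    obtain ⟨⟨hℓd, -⟩, -, hcop⟩ := hp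
    have hdℓ : 0 < d / ℓ := Nat.div_pos (Nat.le_of_dvd hd hℓd) (Nat.pos_of_dvd_of_pos hℓd hd)
    rw [gcd_mul_div_self_of_coprime hℓd hcop, Nat.div_div_self hℓd hd.ne',
      Nat.mul_div_cancel _ hdℓ]
  · intro k _
    rw [Nat.div_div_self (Nat.gcd_dvd_right _ _) hd.ne', Nat.div_mul_cancel (Nat.gcd_dvd_left _ _)]
  · rintro ⟨ℓ, j⟩ hp
    simp only [mem_sigma, Nat.mem_divisors] at hp
    have hℓ : (ℓ : ℝ) ≠ 0 := Nat.cast_ne_zero.2 (Nat.pos_of_dvd_of_pos hp.1.1 hd).ne'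
    have hd₀ : (d : ℝ) ≠ 0 := by positivity
    congr 1
    rw [Nat.cast_mul, Nat.cast_div hp.1.1 hℓ]
    field_simp

lemma sum_divisors_ramanujanSum (d : ℕ) (n : ℤ) :
    ∑ ℓ ∈ d.divisors, ramanujanSum ℓ n = if (d : ℤ) ∣ n then (d : ℂ) else 0 := by
  rw [sum_divisors_ramanujanSum_eq_sum_Icc, sum_Icc_expi_div]

lemma sum_Rcoef_mul (g : ℕ → ℝ) (Q : ℕ) (c : ℕ → ℂ) :
    ∑ ℓ ∈ Icc 1 Q, (Rcoef g Q ℓ : ℂ) * c ℓ =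
      ∑ d ∈ Icc 1 Q, (g d / d : ℂ) * ∑ ℓ ∈ d.divisors, c ℓ := by
  simp only [Rcoef]
  push_cast
  simp only [sum_filter, sum_mul, ite_mul, zero_mul, mul_sum]
  rw [sum_comm]
  refine sum_congr rfl fun d hd => ?_
  rw [← sum_filter]
  congr 1
  ext ℓ
  simp only [mem_Icc] at hd
  simp only [mem_filter, mem_Icc, Nat.mem_divisors]
  constructor
  · rintro ⟨-, hℓd⟩
    exact ⟨hℓd, by omega⟩
  · rintro ⟨hℓd, -⟩
    exact ⟨⟨Nat.pos_of_dvd_of_pos hℓd hd.1, (Nat.le_of_dvd hd.1 hℓd).trans hd.2⟩, hℓd⟩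

lemma sieveFn_eq_sum_Icc (g : ℕ → ℝ) (Q : ℕ) {n : ℕ} (hn : n ≠ 0) :
    sieveFn g Q n = ∑ d ∈ Icc 1 Q, if d ∣ n then g d else 0 := by
  rw [sieveFn, ← sum_filter]
  congr 1
  ext d
  simp only [mem_filter, Nat.mem_divisors, mem_Icc]
  constructor
  · rintro ⟨⟨hdn, -⟩, hdQ⟩
    exact ⟨⟨Nat.pos_of_dvd_of_pos hdn (Nat.pos_of_ne_zero hn), hdQ⟩, hdn⟩
  · rintro ⟨⟨-, hdQ⟩, hdn⟩
    exact ⟨⟨hdn, hn⟩, hdQ⟩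

theorem statement10_general (Q : ℕ) (g : ℕ → ℝ) (n : ℕ) (hn : 0 < n) :
    (sieveFn g Q n : ℂ) =
      ∑ ℓ ∈ Finset.Icc 1 Q, ((Rcoef g Q ℓ : ℝ) : ℂ) *
        ∑ j ∈ (Finset.Icc 1 ℓ).filter (fun j => Nat.Coprime j ℓ), expi (j * n / ℓ) := by
  have hc : ∀ ℓ : ℕ, ∑ j ∈ (Icc 1 ℓ).filter (fun j => Nat.Coprime j ℓ), expi (j * n / ℓ) =
      ramanujanSum ℓ n := fun ℓ => by simp [ramanujanSum]
  simp only [hc, sum_Rcoef_mul, sum_divisors_ramanujanSum, sieveFn_eq_sum_Icc g Q hn.ne',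
    Int.natCast_dvd_natCast, Complex.ofReal_sum]
  refine sum_congr rfl fun d hd => ?_
  have hd₀ : (d : ℂ) ≠ 0 := Nat.cast_ne_zero.2 (by simp only [mem_Icc] at hd; omega)
  split_ifs
  · field_simp
  · simp

/-- the finite Ramanujan expansion `f(n) = ∑_{ℓ≤Q} R_ℓ(f) c_ℓ(n)` of a sieve
function of range `Q`, where `c_ℓ(n) = ∑_{1≤j≤ℓ, (j,ℓ)=1} e(jn/ℓ)`. -/
theorem statement10 (Q : ℕ) (hQ : 0 < Q) (g : ℕ → ℝ)
    (hg : ∀ ε : ℝ, 0 < ε → ∃ C : ℝ, ∀ d : ℕ, 1 ≤ d → |g d| ≤ C * (d : ℝ) ^ ε)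
    (hsupp : SuppIn g Q) (n : ℕ) (hn : 0 < n) :
    (sieveFn g Q n : ℂ) =
      ∑ ℓ ∈ Finset.Icc 1 Q, ((Rcoef g Q ℓ : ℝ) : ℂ) *
        ∑ j ∈ (Finset.Icc 1 ℓ).filter (fun j => Nat.Coprime j ℓ), expi (j * n / ℓ) :=
  statement10_general Q g n hn

end
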